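/- arXiv:1707.04062 — 6 statements merged into one kernel-verified Lean document; each statement's English description precedes it below -/
import Mathlib

section
/- Let S be a numerical semigroup with conductor c, and let I be a proper maximum sparse ideal of S. Then the leader of I (the largest element of S \ I) is greater than or equal to c. More precisely, the leader equals 2g - 1 + #(S \ I) where g is the genus of S, hence is at least 2g, which is at least c. -/
/-- `S` is a numerical semigroup: it contains `0`, is closed under addition,
and has finite complement in `ℕ`. -/
def IsNumericalSemigroup (S : Set ℕ) : Prop :=
  0 ∈ S ∧ (∀ a ∈ S, ∀ b ∈ S, a + b ∈ S) ∧ Sᶜ.Finite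

/-- The genus of `S`: the number of gaps, i.e. of elements of `ℕ \ S`. -/
noncomputable def genus (S : Set ℕ) : ℕ := Sᶜ.ncard

/-- The numConductor of `S`: the smallest integer `c` such that every integer `≥ c`
belongs to `S`. -/
noncomputable def numConductor (S : Set ℕ) : ℕ := sInf {c : ℕ | ∀ m, c ≤ m → m ∈ S}

/-- `I` is an ideal of `S`: a nonempty subset of `S` with `I + S ⊆ I`. -/
def IsIdeal (S I : Set ℕ) : Prop :=
  I.Nonempty ∧ I ⊆ S ∧ ∀ i ∈ I, ∀ s ∈ S, i + s ∈ I

/-- The Frobenius number of an ideal `I`: the largest integer not belonging to `I`. -/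
noncomputable def frobeniusNumber (I : Set ℕ) : ℕ := sSup Iᶜ

/-- `I` is a maximum sparse ideal of `S`: its Frobenius number equals
`2g - 1 + #(S \ I)` where `g` is the genus of `S`. -/
def IsMaxSparse (S I : Set ℕ) : Prop :=
  (frobeniusNumber I : ℤ) = 2 * (genus S : ℤ) - 1 + ((S \ I).ncard : ℤ)

/-- The leader of a proper ideal `I` of `S`: the largest element of `S \ I`. -/
noncomputable def leader (S I : Set ℕ) : ℕ := sSup (S \ I)

/-!
If `x` is a gap of `S`, then `y ↦ x - y` maps the non-gaps in `[0, x]` injectively to gaps,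
so at most half of `[0, x]` lies in `S` and every gap is `< 2g`. The complement of a proper
ideal `I` is finite and contains `S \ I ≠ ∅`, so by maximum sparseness its Frobenius number
is `2g - 1 + #(S \ I) ≥ 2g`. It is therefore not a gap, i.e. it lies in `S \ I`, and so it is
the leader.
-/

section Gaps

variable {S : Set ℕ}

lemma ncard_Iic_inter_le_ncard_Iic_sdiff (hadd : ∀ a ∈ S, ∀ b ∈ S, a + b ∈ S) {x : ℕ}
    (hx : x ∉ S) : (Set.Iic x ∩ S).ncard ≤ (Set.Iic x \ S).ncard := by
  refine Set.ncard_le_ncard_of_injOn (x - ·) ?_ ?_ ((Set.finite_Iic x).sdiff)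
  · rintro y ⟨hyx, hyS⟩
    refine ⟨Nat.sub_le x y, fun hxyS => hx ?_⟩
    simpa [Nat.add_sub_cancel' (Set.mem_Iic.1 hyx)] using hadd y hyS (x - y) hxyS
  · intro a ha b hb hab
    have hx' : x - (x - a) = x - (x - b) := congrArg (x - ·) hab
    rwa [Nat.sub_sub_self ha.1, Nat.sub_sub_self hb.1] at hx'

lemma lt_two_mul_genus_of_notMem (hadd : ∀ a ∈ S, ∀ b ∈ S, a + b ∈ S) (hfin : Sᶜ.Finite)
    {x : ℕ} (hx : x ∉ S) : x < 2 * genus S := by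
  have hgaps : (Set.Iic x \ S).ncard ≤ genus S :=
    Set.ncard_le_ncard (fun y hy => hy.2) hfin
  have hsplit := Set.ncard_inter_add_ncard_sdiff_eq_ncard (Set.Iic x) S (Set.finite_Iic x)
  rw [Set.ncard_Iic_nat] at hsplit
  have := ncard_Iic_inter_le_ncard_Iic_sdiff hadd hx
  omega

lemma mem_of_two_mul_genus_le (hadd : ∀ a ∈ S, ∀ b ∈ S, a + b ∈ S) (hfin : Sᶜ.Finite)
    {x : ℕ} (hx : 2 * genus S ≤ x) : x ∈ S := by
  by_contra hxS
  exact (lt_two_mul_genus_of_notMem hadd hfin hxS).not_ge hx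

lemma numConductor_le_two_mul_genus (hadd : ∀ a ∈ S, ∀ b ∈ S, a + b ∈ S)
    (hfin : Sᶜ.Finite) : numConductor S ≤ 2 * genus S :=
  Nat.sInf_le fun _ => mem_of_two_mul_genus_le hadd hfin

end Gaps

section Ideals

variable {S I : Set ℕ}

lemma IsIdeal.finite_compl (hI : IsIdeal S I) (hfin : Sᶜ.Finite) : Iᶜ.Finite := by
  obtain ⟨⟨i, hi⟩, -, hclosed⟩ := hI
  refine ((Set.finite_Iio i).union (hfin.image (i + ·))).subset fun n hn => ?_
  by_cases hni : n < i
  · exact Or.inl hni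
  · have hn' : i + (n - i) = n := by omega
    exact Or.inr ⟨n - i, fun hS => hn (hn' ▸ hclosed i hi (n - i) hS), hn'⟩

lemma leader_eq_frobeniusNumber (hfin : Iᶜ.Finite) (hne : Iᶜ.Nonempty)
    (hF : frobeniusNumber I ∈ S) : leader S I = frobeniusNumber I :=
  IsGreatest.csSup_eq
    ⟨⟨hF, Nat.sSup_mem hne hfin.bddAbove⟩, fun _ hx => le_csSup hfin.bddAbove hx.2⟩

end Ideals

/-- The leader of a proper maximum sparse ideal equals `2g - 1 + #(S \ I)`,
hence is at least `2g`, which is at least the numConductor; in particular the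
leader is at least the numConductor. -/
theorem leader_eq_and_ge_conductor (S I : Set ℕ)
    (hS : IsNumericalSemigroup S) (hI : IsIdeal S I) (hproper : I ≠ S)
    (hms : IsMaxSparse S I) :
    (leader S I : ℤ) = 2 * (genus S : ℤ) - 1 + ((S \ I).ncard : ℤ) ∧
    2 * genus S ≤ leader S I ∧
    numConductor S ≤ 2 * genus S ∧
    numConductor S ≤ leader S I := by
  obtain ⟨-, hadd, hfin⟩ := hS
  have hIfin : Iᶜ.Finite := hI.finite_compl hfin
  have hdiff : (S \ I).Nonempty := Set.nonempty_of_ssubset (hI.2.1.ssubset_of_ne hproper)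
  have hcard : 0 < (S \ I).ncard :=
    (Set.ncard_pos (hIfin.subset fun _ hx => hx.2)).2 hdiff
  have hF : 2 * genus S ≤ frobeniusNumber I := by
    unfold IsMaxSparse at hms
    omega
  have hL : leader S I = frobeniusNumber I :=
    leader_eq_frobeniusNumber hIfin (hdiff.mono fun _ hx => hx.2)
      (mem_of_two_mul_genus_le hadd hfin hF)
  have hc := numConductor_le_two_mul_genus hadd hfin
  exact ⟨hL ▸ hms, hL ▸ hF, hc, hL ▸ hc.trans hF⟩
end

section
/- Let S be a numerical semigroup of genus g and let I be a proper maximum sparse ideal of S. Then the Frobenius number of I (the largest integer not belonging to I) is itself an element of S; equivalently, the Frobenius number of I equals the largest element of S \ I. -/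
/-!
Let `F` be the Frobenius number of `I`. The gaps of `I` are the `g` gaps of `S` together with
`S \ I`, and maximum sparseness says that there are exactly `F + 1 - g` of them. If `x ≤ F` is
not a gap of `I`, then `F - x` is a gap of `S`, since otherwise `F = x + (F - x) ∈ I`. So `[0, F]`
is covered by the gaps of `I` and the at most `g` numbers `F - s` with `s ≤ F` a gap of `S`, and
counting forces these two sets to be disjoint. As `0` is a gap of `I`, it is not of the form
`F - s`, that is, `F` is not a gap of `S`.
-/

theorem ncard_compl_eq_ncard_compl_add_ncard_diff {α : Type*} {S I : Set α} (hIS : I ⊆ S)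
    (hI : Iᶜ.Finite) : Iᶜ.ncard = Sᶜ.ncard + (S \ I).ncard := by
  rw [← Set.ncard_sdiff_add_ncard_of_subset (Set.compl_subset_compl.2 hIS) hI,
    compl_sdiff_compl, add_comm]

theorem disjoint_of_Iic_subset_union {A B : Set ℕ} {n : ℕ} (hA : A.Finite) (hB : B.Finite)
    (hcover : Set.Iic n ⊆ A ∪ B) (hcard : A.ncard + B.ncard ≤ n + 1) : Disjoint A B := by
  refine (Set.ncard_union_eq_iff hA hB).1 (le_antisymm (Set.ncard_union_le A B) ?_)
  calc A.ncard + B.ncard ≤ n + 1 := hcard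
    _ = (Set.Iic n).ncard := by simp
    _ ≤ (A ∪ B).ncard := Set.ncard_le_ncard hcover (hA.union hB)

theorem isGreatest_frobeniusNumber {I : Set ℕ} (hfin : Iᶜ.Finite) (hne : Iᶜ.Nonempty) :
    IsGreatest Iᶜ (frobeniusNumber I) :=
  ⟨hne.csSup_mem hfin, fun _ hx => le_csSup hfin.bddAbove hx⟩

namespace IsIdeal

variable {S I : Set ℕ}

theorem zero_notMem (hI : IsIdeal S I) (hproper : I ≠ S) : 0 ∉ I := fun h0 =>
  hproper <| hI.2.1.antisymm fun s hs => by simpa using hI.2.2 0 h0 s hs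

theorem finite_compl_s1 (hI : IsIdeal S I) (hS : Sᶜ.Finite) : Iᶜ.Finite := by
  obtain ⟨⟨i, hi⟩, -, hadd⟩ := hI
  refine ((Set.finite_Iio i).union (hS.image (i + ·))).subset fun x hx => ?_
  by_cases hxi : x < i
  · exact Or.inl hxi
  · refine Or.inr ⟨x - i, fun hs => hx ?_, show i + (x - i) = x by omega⟩
    simpa [Nat.add_sub_cancel' (not_lt.1 hxi)] using hadd i hi (x - i) hs

theorem Iic_subset_compl_union_image (hI : IsIdeal S I) {F : ℕ} (hF : F ∉ I) :
    Set.Iic F ⊆ Iᶜ ∪ (F - ·) '' (Sᶜ ∩ Set.Iic F) := by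
  intro x hx
  by_cases hxI : x ∈ I
  · refine Or.inr ⟨F - x, ⟨fun hs => hF ?_, Nat.sub_le F x⟩, Nat.sub_sub_self hx⟩
    simpa [Nat.add_sub_cancel' hx] using hI.2.2 x hxI _ hs
  · exact Or.inl hxI

end IsIdeal

/-- The Frobenius number of a proper maximum sparse ideal belongs to `S`;
equivalently, it equals the largest element of `S \ I`. -/
theorem frobenius_mem_and_eq_leader (S I : Set ℕ)
    (hS : IsNumericalSemigroup S) (hI : IsIdeal S I) (hproper : I ≠ S)
    (hms : IsMaxSparse S I) :
    frobeniusNumber I ∈ S ∧ frobeniusNumber I = sSup (S \ I) := by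
  obtain ⟨-, -, hSfin⟩ := hS
  have h0 : 0 ∉ I := hI.zero_notMem hproper
  have hIfin : Iᶜ.Finite := hI.finite_compl_s1 hSfin
  set F := frobeniusNumber I
  have hF : IsGreatest Iᶜ F := isGreatest_frobeniusNumber hIfin ⟨0, h0⟩
  have hdisj : Disjoint Iᶜ ((F - ·) '' (Sᶜ ∩ Set.Iic F)) := by
    refine disjoint_of_Iic_subset_union hIfin ((hSfin.inter_of_left _).image _)
      (hI.Iic_subset_compl_union_image hF.1) ?_
    have hgaps := ncard_compl_eq_ncard_compl_add_ncard_diff hI.2.1 hIfin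
    have himage := Set.ncard_image_le (f := (F - ·)) (hSfin.inter_of_left (Set.Iic F))
    have hinter := Set.ncard_inter_le_ncard_left Sᶜ (Set.Iic F) hSfin
    unfold IsMaxSparse genus at hms
    omega
  have hFS : F ∈ S := by
    by_contra hFS
    have h0_image : 0 ∈ (F - ·) '' (Sᶜ ∩ Set.Iic F) :=
      ⟨F, ⟨hFS, Set.mem_Iic.2 le_rfl⟩, Nat.sub_self F⟩
    exact hdisj.ne_of_mem h0 h0_image rfl
  have hleader : IsGreatest (S \ I) F := ⟨⟨hFS, hF.1⟩, fun _ hx => hF.2 hx.2⟩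
  exact ⟨hFS, hleader.csSup_eq.symm⟩
end

section
/- Let S be a numerical semigroup with conductor c, and let λ be a nonzero element of S with λ < c. Then there exist gaps a, b of S (i.e., a, b ∈ ℕ \ S) with a + b = λ. In other words, every positive non-gap smaller than the conductor is a sum of two gaps. -/
/-!
Let `b` be the largest gap below `λ` (there is one, since `1` is a gap) and `a = λ - b`.
If `a` were in `S`, the `a` consecutive elements `b + 1, …, λ` of `S`, translated by multiples
of `a`, would cover every integer `> b`, forcing `c ≤ b + 1 ≤ λ`.
-/

section

variable {S : Set ℕ}

theorem forall_mem_of_Ico_subset (hadd : ∀ x ∈ S, ∀ y ∈ S, x + y ∈ S) {a n : ℕ}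
    (ha : a ∈ S) (ha0 : 0 < a) (hI : Set.Ico n (n + a) ⊆ S) : ∀ m, n ≤ m → m ∈ S := by
  intro m
  induction m using Nat.strong_induction_on with
  | _ m ih =>
    intro hnm
    by_cases hm : m < n + a
    · exact hI ⟨hnm, hm⟩
    · have hsub : m - a ∈ S := ih (m - a) (by omega) (by omega)
      simpa [Nat.sub_add_cancel (show a ≤ m by omega)] using hadd _ hsub _ ha

theorem numConductor_le_of_Ico_subset (hadd : ∀ x ∈ S, ∀ y ∈ S, x + y ∈ S) {a n : ℕ}
    (ha : a ∈ S) (ha0 : 0 < a) (hI : Set.Ico n (n + a) ⊆ S) : numConductor S ≤ n :=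
  Nat.sInf_le (forall_mem_of_Ico_subset hadd ha ha0 hI)

theorem one_notMem_of_numConductor_pos (h0 : 0 ∈ S) (hadd : ∀ x ∈ S, ∀ y ∈ S, x + y ∈ S)
    (hc : 0 < numConductor S) : 1 ∉ S := fun h1 ↦
  hc.ne' (Nat.le_zero.mp (numConductor_le_of_Ico_subset hadd h1 one_pos fun x hx ↦ by simp_all))

theorem exists_lt_notMem_Ico_subset {g lam : ℕ} (hg : g ∉ S) (hgl : g ≤ lam) (hlam : lam ∈ S) :
    ∃ b < lam, b ∉ S ∧ Set.Ico (b + 1) (lam + 1) ⊆ S := by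
  classical
  set b := Nat.findGreatest (· ∉ S) lam
  have hb : b ∉ S := Nat.findGreatest_spec (P := (· ∉ S)) hgl hg
  have hblt : b < lam :=
    lt_of_le_of_ne (Nat.findGreatest_le lam) fun h ↦ hb (h ▸ hlam)
  refine ⟨b, hblt, hb, fun x ⟨hbx, hxl⟩ ↦ ?_⟩
  by_contra hx
  exact Nat.findGreatest_is_greatest hbx (Nat.lt_succ_iff.mp hxl) hx

end

/-- Every positive non-gap smaller than the numConductor is a sum of two gaps. -/
theorem nongap_lt_conductor_sum_of_gaps (S : Set ℕ)
    (hS : IsNumericalSemigroup S) (lam : ℕ) (hlam : lam ∈ S) (hne : lam ≠ 0)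
    (hlt : lam < numConductor S) :
    ∃ a b : ℕ, a ∉ S ∧ b ∉ S ∧ a + b = lam := by
  obtain ⟨h0, hadd, -⟩ := hS
  have h1 : 1 ∉ S := one_notMem_of_numConductor_pos h0 hadd (by omega)
  obtain ⟨b, hblt, hb, hI⟩ := exists_lt_notMem_Ico_subset h1 (by omega) hlam
  refine ⟨lam - b, b, fun ha ↦ ?_, hb, by omega⟩
  have hI' : Set.Ico (b + 1) (b + 1 + (lam - b)) ⊆ S := by
    rwa [show b + 1 + (lam - b) = lam + 1 by omega]
  have := numConductor_le_of_Ico_subset hadd ha (by omega) hI'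
  omega
end

section
/- Let S be a numerical semigroup with conductor c. Let λ ∈ S with λ ≥ c and let μ ∈ S. If there exist gaps a, b of S with a + b = λ + μ, then there exist gaps a', b' of S with a' + b' = λ. (Concretely, in this situation both a and b are greater than μ and a - μ is a gap, so (a - μ) + b = λ is a sum of two gaps.) -/
theorem mem_of_numConductor_le {S : Set ℕ} (hfin : Sᶜ.Finite) {m : ℕ}
    (hm : numConductor S ≤ m) : m ∈ S := by
  have hne : {c : ℕ | ∀ m, c ≤ m → m ∈ S}.Nonempty := by
    obtain ⟨B, hB⟩ := hfin.bddAbove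
    refine ⟨B + 1, fun m hm => ?_⟩
    by_contra hmS
    have := hB hmS
    omega
  exact Nat.sInf_mem hne m hm

theorem lt_numConductor_of_notMem {S : Set ℕ} (hfin : Sᶜ.Finite) {b : ℕ} (hb : b ∉ S) :
    b < numConductor S :=
  not_le.mp (mt (mem_of_numConductor_le hfin) hb)

theorem sub_notMem_of_notMem {S : Set ℕ} (hadd : ∀ a ∈ S, ∀ b ∈ S, a + b ∈ S) {a mu : ℕ}
    (ha : a ∉ S) (hmu : mu ∈ S) (hle : mu ≤ a) : a - mu ∉ S :=
  fun h => ha (Nat.sub_add_cancel hle ▸ hadd _ h _ hmu)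

theorem sum_of_gaps_descends_general (S : Set ℕ) (hS : IsNumericalSemigroup S)
    (lam mu : ℕ) (hc : numConductor S ≤ lam) (hmu : mu ∈ S)
    (h : ∃ a b : ℕ, a ∉ S ∧ b ∉ S ∧ a + b = lam + mu) :
    ∃ a' b' : ℕ, a' ∉ S ∧ b' ∉ S ∧ a' + b' = lam := by
  obtain ⟨_, hadd, hfin⟩ := hS
  obtain ⟨a, b, ha, hb, hab⟩ := h
  have hb_lt : b < lam := (lt_numConductor_of_notMem hfin hb).trans_le hc
  have hmu_le : mu ≤ a := by omega
  exact ⟨a - mu, b, sub_notMem_of_notMem hadd ha hmu hmu_le, hb, by omega⟩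

/-- If `λ ∈ S` with `λ` at least the numConductor, `μ ∈ S`, and `λ + μ` is a sum
of two gaps of `S`, then `λ` itself is a sum of two gaps of `S`. -/
theorem sum_of_gaps_descends (S : Set ℕ) (hS : IsNumericalSemigroup S)
    (lam mu : ℕ) (hlam : lam ∈ S) (hc : numConductor S ≤ lam) (hmu : mu ∈ S)
    (h : ∃ a b : ℕ, a ∉ S ∧ b ∉ S ∧ a + b = lam + mu) :
    ∃ a' b' : ℕ, a' ∉ S ∧ b' ∉ S ∧ a' + b' = lam :=
  sum_of_gaps_descends_general S hS lam mu hc hmu h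
end

section
/- Let S be a numerical semigroup and let L be the set of all nonzero elements λ of S such that λ is not expressible as a sum of two gaps of S. Then L is an ideal of S, i.e., L ⊆ S and L + S ⊆ L. Moreover every element of L is greater than or equal to the conductor of S. -/
/-!
Let `s ∈ S` be nonzero and not a sum of two gaps, so that `s - a ∈ S` for every gap `a ≤ s`.
Then every gap lies below `s`: otherwise reducing one modulo `s` gives a gap `r < s` with
`s + r` a gap too, and the gaps below `s`, being closed under adding `r` modulo `s`, would
contain `0`. Hence `c ≤ s`; and if `s + t = a + b` with `t ∈ S` and gaps `a, b`, then `b < s`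
forces `a ≥ t`, so that `s = (a - t) + b` is a sum of two gaps.
-/

def IsSumOfTwoGaps (S : Set ℕ) (n : ℕ) : Prop :=
  ∃ a b : ℕ, a ∉ S ∧ b ∉ S ∧ a + b = n

def IsNumericalSemigroup.toAddSubmonoid {S : Set ℕ} (hS : IsNumericalSemigroup S) :
    AddSubmonoid ℕ where
  carrier := S
  add_mem' ha hb := hS.2.1 _ ha _ hb
  zero_mem' := hS.1

namespace AddSubmonoid

variable {S : AddSubmonoid ℕ} {s r a x t k : ℕ}

theorem notMem_of_add_mul_notMem (ht : t ∈ S) (h : x + k * t ∉ S) : x ∉ S := fun hx =>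
  h (S.add_mem hx (by simpa only [smul_eq_mul] using S.nsmul_mem ht k))

theorem sub_mem_of_not_isSumOfTwoGaps (hs : ¬ IsSumOfTwoGaps S s) (ha : a ∉ S) (has : a ≤ s) :
    s - a ∈ S := by
  by_contra h
  exact hs ⟨a, s - a, ha, h, by omega⟩

/-- If `s + r` is a gap, then so is `a + r` for every gap `a ≤ s`: otherwise
`s + r = (s - a) + (a + r)` would lie in `S`. -/
theorem add_mod_notMem_of_not_isSumOfTwoGaps (hs : ¬ IsSumOfTwoGaps S s) (hsS : s ∈ S)
    (hsr : s + r ∉ S) (ha : a ∉ S) (has : a ≤ s) : (a + r) % s ∉ S := by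
  have har : a + r ∉ S := fun h => hsr <| by
    simpa only [show s - a + (a + r) = s + r by omega] using
      S.add_mem (sub_mem_of_not_isSumOfTwoGaps hs ha has) h
  refine notMem_of_add_mul_notMem (k := (a + r) / s) hsS ?_
  rwa [mul_comm, Nat.mod_add_div]

theorem add_mem_of_not_isSumOfTwoGaps (hs : ¬ IsSumOfTwoGaps S s) (hsS : s ∈ S)
    (hr : r ∉ S) (hrs : r < s) : s + r ∈ S := by
  by_contra hsr
  have hmul : ∀ k, (k + 1) * r % s ∉ S := by
    intro k
    induction k with
    | zero => simpa [Nat.mod_eq_of_lt hrs] using hr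
    | succ k ih =>
      have := add_mod_notMem_of_not_isSumOfTwoGaps hs hsS hsr ih (Nat.mod_lt _ (by omega)).le
      rwa [Nat.mod_add_mod, ← Nat.succ_mul] at this
  obtain ⟨k, rfl⟩ : ∃ k, s = k + 1 := ⟨s - 1, by omega⟩
  simpa [Nat.mul_mod_left] using hmul k

theorem lt_of_not_isSumOfTwoGaps (hs : ¬ IsSumOfTwoGaps S s) (hsS : s ∈ S) (hs0 : s ≠ 0)
    {g : ℕ} (hg : g ∉ S) : g < s := by
  by_contra! hsg
  have hpos : 0 < s := Nat.pos_of_ne_zero hs0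
  obtain ⟨q, hq⟩ : ∃ q, g / s = q + 1 :=
    ⟨g / s - 1, by have := (Nat.one_le_div_iff hpos).2 hsg; omega⟩
  have hdiv : g % s + (q + 1) * s = g := by rw [← hq, mul_comm, Nat.mod_add_div]
  have hr : g % s ∉ S := notMem_of_add_mul_notMem hsS (by rwa [hdiv])
  refine notMem_of_add_mul_notMem (k := q) hsS ?_
    (add_mem_of_not_isSumOfTwoGaps hs hsS hr (Nat.mod_lt _ hpos))
  rwa [show s + g % s + q * s = g by linarith [add_one_mul q s]]

theorem numConductor_le_of_not_isSumOfTwoGaps (hs : ¬ IsSumOfTwoGaps S s) (hsS : s ∈ S)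
    (hs0 : s ≠ 0) : numConductor S ≤ s :=
  Nat.sInf_le fun _ hm => by_contra fun hg => (lt_of_not_isSumOfTwoGaps hs hsS hs0 hg).not_ge hm

theorem not_isSumOfTwoGaps_add (hs : ¬ IsSumOfTwoGaps S s) (hsS : s ∈ S) (hs0 : s ≠ 0)
    (ht : t ∈ S) : ¬ IsSumOfTwoGaps S (s + t) := by
  rintro ⟨a, b, ha, hb, hab⟩
  have hbs := lt_of_not_isSumOfTwoGaps hs hsS hs0 hb
  have hat : a - t ∉ S :=
    notMem_of_add_mul_notMem (k := 1) ht (by rwa [one_mul, Nat.sub_add_cancel (by omega)])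
  exact hs ⟨a - t, b, hat, hb, by omega⟩

end AddSubmonoid

/-- The set `L` of nonzero elements of `S` that are not a sum of two gaps is
an ideal of `S` (`L ⊆ S` and `L + S ⊆ L`), and every element of `L` is at
least the numConductor. -/
theorem notSumTwoGaps_isIdeal (S : Set ℕ) (hS : IsNumericalSemigroup S) :
    let L : Set ℕ :=
      {lam | lam ∈ S ∧ lam ≠ 0 ∧ ¬ ∃ a b : ℕ, a ∉ S ∧ b ∉ S ∧ a + b = lam}
    L ⊆ S ∧ (∀ l ∈ L, ∀ s ∈ S, l + s ∈ L) ∧ ∀ l ∈ L, numConductor S ≤ l := by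
  intro L
  let T := hS.toAddSubmonoid
  refine ⟨fun l hl => hl.1, ?_, fun l ⟨hlS, hl0, hl⟩ =>
    AddSubmonoid.numConductor_le_of_not_isSumOfTwoGaps (S := T) hl hlS hl0⟩
  rintro l ⟨hlS, hl0, hl⟩ t ht
  exact ⟨T.add_mem hlS ht, by omega, AddSubmonoid.not_isSumOfTwoGaps_add (S := T) hl hlS hl0 ht⟩
end

section
/- (Combinatorial content of the puncturing theorem.) Let W be a numerical semigroup of genus g. Let A and A' be finite subsets of W, each containing 0, with A' ⊆ A, such that both W \ A and W \ A' are proper maximum sparse ideals of W. Set n = #A and n' = #A'. Then n - n' ∈ W. In particular, if n' < n then n - n' is at least the multiplicity (smallest nonzero element) of W. -/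
/-! Write `ℓ` for the Frobenius number of a maximum sparse ideal `W \ B`. Counting `[0, ℓ]`, which
has `2g + #B` elements, shows that at least `g` of them lie in the ideal; the reflection
`x ↦ ℓ - x` sends these into the gaps of `W`, so it cannot send one more element there. Hence
`ℓ - b ∈ W` for every `b ∈ B`. Applied to `b = ℓ' ∈ A' ⊆ A`, where `ℓ'` is the Frobenius number of
`W \ A'`, this gives `ℓ - ℓ' = #A - #A' ∈ W`. -/

theorem ncard_le_genus_of_sub_notMem {W S : Set ℕ} (hWc : Wᶜ.Finite) {c : ℕ}
    (hS : S ⊆ Set.Iic c) (hgap : ∀ x ∈ S, c - x ∉ W) : S.ncard ≤ genus W :=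
  Set.ncard_le_ncard_of_injOn (c - ·) hgap
    (fun x hx y hy hxy => by have := hS hx; have := hS hy; simp_all; omega) hWc

theorem ncard_Iic_inter_add_ncard_Iic_sdiff (S : Set ℕ) (c : ℕ) :
    (Set.Iic c ∩ S).ncard + (Set.Iic c \ S).ncard = c + 1 := by
  rw [Set.ncard_inter_add_ncard_sdiff_eq_ncard _ _ (Set.finite_Iic c), ← Finset.coe_Iic,
    Set.ncard_coe_finset, Nat.card_Iic]

namespace IsNumericalSemigroup

variable {W : Set ℕ}

theorem mem_of_two_mul_genus_le (hW : IsNumericalSemigroup W) {m : ℕ} (hm : 2 * genus W ≤ m) :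
    m ∈ W := by
  obtain ⟨-, hadd, hWc⟩ := hW
  by_contra hmW
  have hsmall : (Set.Iic m ∩ W).ncard ≤ genus W :=
    ncard_le_genus_of_sub_notMem hWc Set.inter_subset_left fun x ⟨hxm, hxW⟩ hmx =>
      hmW (Nat.add_sub_cancel' hxm ▸ hadd x hxW _ hmx)
  have hgaps : (Set.Iic m \ W).ncard ≤ genus W :=
    Set.ncard_le_ncard (fun _ hx => hx.2) hWc
  have := ncard_Iic_inter_add_ncard_Iic_sdiff W m
  omega

end IsNumericalSemigroup

section MaxSparse

variable {W B : Set ℕ}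

theorem finite_compl_sdiff (hWc : Wᶜ.Finite) (hB : B.Finite) : (W \ B)ᶜ.Finite := by
  rw [Set.compl_sdiff]
  exact hB.union hWc

theorem frobeniusNumber_sdiff_notMem (hWc : Wᶜ.Finite) (hB : B.Finite) (h0B : 0 ∈ B) :
    frobeniusNumber (W \ B) ∉ W \ B :=
  Nat.sSup_mem ⟨0, fun h => h.2 h0B⟩ (finite_compl_sdiff hWc hB).bddAbove

theorem le_frobeniusNumber_sdiff (hWc : Wᶜ.Finite) (hB : B.Finite) {x : ℕ} (hx : x ∈ B) :
    x ≤ frobeniusNumber (W \ B) :=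
  le_csSup (finite_compl_sdiff hWc hB).bddAbove fun h => h.2 hx

namespace IsMaxSparse

theorem frobeniusNumber_add_one (hms : IsMaxSparse W (W \ B)) (hB : B.Finite) (h0B : 0 ∈ B)
    (hBW : B ⊆ W) : frobeniusNumber (W \ B) + 1 = 2 * genus W + B.ncard := by
  have hpos : 0 < B.ncard := (Set.ncard_pos hB).mpr ⟨0, h0B⟩
  unfold IsMaxSparse at hms
  rw [Set.sdiff_sdiff_cancel_left hBW] at hms
  omega

theorem frobeniusNumber_mem (hms : IsMaxSparse W (W \ B)) (hW : IsNumericalSemigroup W)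
    (hB : B.Finite) (h0B : 0 ∈ B) (hBW : B ⊆ W) : frobeniusNumber (W \ B) ∈ B := by
  have hpos : 0 < B.ncard := (Set.ncard_pos hB).mpr ⟨0, h0B⟩
  have hmem : frobeniusNumber (W \ B) ∈ W :=
    hW.mem_of_two_mul_genus_le (by have := hms.frobeniusNumber_add_one hB h0B hBW; omega)
  by_contra hnot
  exact frobeniusNumber_sdiff_notMem hW.2.2 hB h0B ⟨hmem, hnot⟩

theorem genus_le_ncard_Iic_inter (hms : IsMaxSparse W (W \ B)) (hWc : Wᶜ.Finite)
    (hB : B.Finite) (h0B : 0 ∈ B) (hBW : B ⊆ W) :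
    genus W ≤ (Set.Iic (frobeniusNumber (W \ B)) ∩ (W \ B)).ncard := by
  set ℓ := frobeniusNumber (W \ B)
  have hrest : (Set.Iic ℓ \ (W \ B)).ncard ≤ B.ncard + genus W :=
    calc (Set.Iic ℓ \ (W \ B)).ncard ≤ (B ∪ Wᶜ).ncard :=
          Set.ncard_le_ncard (fun _ hx => Set.compl_sdiff ▸ hx.2) (hB.union hWc)
      _ ≤ B.ncard + genus W := Set.ncard_union_le B Wᶜ
  have := ncard_Iic_inter_add_ncard_Iic_sdiff (W \ B) ℓ
  have := hms.frobeniusNumber_add_one hB h0B hBW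
  omega

theorem frobeniusNumber_sub_mem (hms : IsMaxSparse W (W \ B)) (hW : IsNumericalSemigroup W)
    (hB : B.Finite) (h0B : 0 ∈ B) (hBW : B ⊆ W) (hI : IsIdeal W (W \ B)) {x : ℕ} (hx : x ∈ B) :
    frobeniusNumber (W \ B) - x ∈ W := by
  have hlower := hms.genus_le_ncard_Iic_inter hW.2.2 hB h0B hBW
  set ℓ := frobeniusNumber (W \ B)
  by_contra hxgap
  have hreflect : ∀ y ∈ insert x (Set.Iic ℓ ∩ (W \ B)), ℓ - y ∉ W := by
    rintro y (rfl | ⟨hyℓ, hyI⟩) hℓy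
    · exact hxgap hℓy
    · have hℓI := hI.2.2 y hyI _ hℓy
      rw [Nat.add_sub_cancel' hyℓ] at hℓI
      exact frobeniusNumber_sdiff_notMem hW.2.2 hB h0B hℓI
  have hsub : insert x (Set.Iic ℓ ∩ (W \ B)) ⊆ Set.Iic ℓ :=
    Set.insert_subset (le_frobeniusNumber_sdiff hW.2.2 hB hx) Set.inter_subset_left
  have hupper := ncard_le_genus_of_sub_notMem hW.2.2 hsub hreflect
  rw [Set.ncard_insert_of_notMem (fun h => h.2.2 hx) ((Set.finite_Iic ℓ).inter_of_left _)]
    at hupper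
  omega

end IsMaxSparse

end MaxSparse

theorem puncturing_card_diff_mem_general (W A A' : Set ℕ)
    (hW : IsNumericalSemigroup W)
    (hA : A.Finite) (h0A' : 0 ∈ A')
    (hsub : A' ⊆ A)
    (hAW : A ⊆ W)
    (hIdA : IsIdeal W (W \ A)) (hmsA : IsMaxSparse W (W \ A))
    (hmsA' : IsMaxSparse W (W \ A')) :
    A.ncard - A'.ncard ∈ W ∧
    (A'.ncard < A.ncard → sInf {s ∈ W | s ≠ 0} ≤ A.ncard - A'.ncard) := by
  have hA' : A'.Finite := hA.subset hsub
  have hA'W : A' ⊆ W := hsub.trans hAW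
  have h0A : 0 ∈ A := hsub h0A'
  have hℓ := hmsA.frobeniusNumber_add_one hA h0A hAW
  have hℓ' := hmsA'.frobeniusNumber_add_one hA' h0A' hA'W
  have hdiff : frobeniusNumber (W \ A) - frobeniusNumber (W \ A') ∈ W :=
    hmsA.frobeniusNumber_sub_mem hW hA h0A hAW hIdA
      (hsub (hmsA'.frobeniusNumber_mem hW hA' h0A' hA'W))
  have hcard : A.ncard - A'.ncard = frobeniusNumber (W \ A) - frobeniusNumber (W \ A') := by
    omega
  rw [hcard]
  exact ⟨hdiff, fun hlt => Nat.sInf_le ⟨hdiff, by omega⟩⟩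

/-- Combinatorial content of the puncturing theorem: if `A' ⊆ A` are finite
subsets of `W` containing `0` whose complements `W \ A` and `W \ A'` are proper
maximum sparse ideals of `W`, then `#A - #A' ∈ W`; in particular, if
`#A' < #A` then the difference is at least the multiplicity of `W`. -/
theorem puncturing_card_diff_mem (W A A' : Set ℕ)
    (hW : IsNumericalSemigroup W)
    (hA : A.Finite) (hA' : A'.Finite) (h0A : 0 ∈ A) (h0A' : 0 ∈ A')
    (hsub : A' ⊆ A)
    (hAW : A ⊆ W) (hA'W : A' ⊆ W)
    (hIdA : IsIdeal W (W \ A)) (hpropA : W \ A ≠ W) (hmsA : IsMaxSparse W (W \ A))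
    (hIdA' : IsIdeal W (W \ A')) (hpropA' : W \ A' ≠ W)
    (hmsA' : IsMaxSparse W (W \ A')) :
    A.ncard - A'.ncard ∈ W ∧
    (A'.ncard < A.ncard → sInf {s ∈ W | s ≠ 0} ≤ A.ncard - A'.ncard) :=
  puncturing_card_diff_mem_general W A A' hW hA h0A' hsub hAW hIdA hmsA hmsA'
end
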